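/- arXiv:1606.03684 — 4 statements merged into one kernel-verified Lean document; each statement's English description precedes it below -/
import Mathlib

section
/- Let n ≥ 1 and let g : ℝ → ℝ be continuous on [0,∞) with g(s) > 0 for all s ≥ 0, such that the map s ↦ s·g(s) is strictly increasing on [0,∞) and tends to ∞ as s → ∞. Then for every vector b ∈ ℝⁿ (with the Euclidean norm) there exists a unique vector u ∈ ℝⁿ such that g(‖u‖)·u = b. -/
/-- Forchheimer's law can be solved uniquely for the velocity: if `g > 0` is
continuous on `[0,∞)`, `s ↦ s g(s)` is strictly increasing on `[0,∞)` and tends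
to `∞`, then for every `b ∈ ℝⁿ` there is a unique `u` with `g(‖u‖) u = b`. -/
theorem forchheimer_unique_solvability (n : ℕ) (hn : 1 ≤ n) (g : ℝ → ℝ)
    (hg_cont : ContinuousOn g (Set.Ici (0 : ℝ)))
    (hg_pos : ∀ s ∈ Set.Ici (0 : ℝ), 0 < g s)
    (hmono : StrictMonoOn (fun s => s * g s) (Set.Ici (0 : ℝ)))
    (htop : Filter.Tendsto (fun s => s * g s) Filter.atTop Filter.atTop)
    (b : EuclideanSpace ℝ (Fin n)) :
    ∃! u : EuclideanSpace ℝ (Fin n), g ‖u‖ • u = b := by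
  -- find M ≥ 0 with ‖b‖ ≤ M * g M
  obtain ⟨M, hMb, hM0⟩ :=
    ((Filter.tendsto_atTop.1 htop ‖b‖).and (Filter.eventually_ge_atTop 0)).exists
  -- IVT to find r with r * g r = ‖b‖
  have hcont : ContinuousOn (fun s => s * g s) (Set.Icc 0 M) :=
    (continuousOn_id.mul hg_cont).mono Set.Icc_subset_Ici_self
  have hsub := intermediate_value_Icc hM0 hcont
  have hbmem : ‖b‖ ∈ Set.Icc ((fun s => s * g s) 0) ((fun s => s * g s) M) := by
    simp only [zero_mul]
    exact ⟨norm_nonneg b, hMb⟩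
  obtain ⟨r, hr, hfr⟩ := hsub hbmem
  have hr0 : (0:ℝ) ≤ r := hr.1
  have hgr : 0 < g r := hg_pos r hr0
  set u : EuclideanSpace ℝ (Fin n) := (g r)⁻¹ • b with hu
  have hnu : ‖u‖ = r := by
    rw [hu, norm_smul, Real.norm_eq_abs, abs_inv, abs_of_pos hgr, ← hfr]
    field_simp
  have hkey : ∀ v : EuclideanSpace ℝ (Fin n), g ‖v‖ • v = b → ‖v‖ = r := by
    intro v hv
    have hnv : ‖v‖ * g ‖v‖ = ‖b‖ := by
      rw [← hv, norm_smul, Real.norm_eq_abs,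
        abs_of_pos (hg_pos _ (norm_nonneg v)), mul_comm]
    exact hmono.injOn (norm_nonneg v) hr0 (hnv.trans hfr.symm)
  refine ⟨u, ?_, ?_⟩
  · show g ‖u‖ • u = b
    rw [hnu, hu, smul_smul, mul_inv_cancel₀ hgr.ne', one_smul]
  · intro v hv
    have h1 := hkey v hv
    rw [hu, ← hv, h1, smul_smul, inv_mul_cancel₀ hgr.ne', one_smul]
end

section
/- Let n ≥ 1 and let g : ℝ → ℝ be continuous on [0,∞), differentiable on (0,∞), with g(s) > 0 for all s ≥ 0, such that the derivative of s ↦ s·g(s) is strictly positive on (0,∞) and s·g(s) → ∞ as s → ∞. Then there exists a function k : ℝ → ℝ, differentiable on (0,∞), such that k(s) > 0 and k(s) + 2s·k'(s) > 0 for all s > 0, and such that for every nonzero vector b ∈ ℝⁿ (with the Euclidean norm) the vector u := k(‖b‖²)·b satisfies g(‖u‖)·u = b. -/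
/-!
The map `G t = t g(t)` is continuous and strictly increasing from `G 0 = 0` to `∞`, so it is a
bijection of `(0, ∞)` whose inverse `F` is differentiable with `F' = 1 / G' ∘ F`. Taking norms in
`g(‖u‖) u = b` forces `‖u‖ = F ‖b‖`, hence `k(s) = F(√s) / √s`. As `r k(r²) = F r`,
differentiating gives `k(s) + 2 s k'(s) = F'(√s) > 0`.
-/

open Set Filter Topology Function

theorem bijOn_Ioi_of_strictMonoOn_Ici {G : ℝ → ℝ} {a : ℝ} (hcont : ContinuousOn G (Ici a))
    (hmono : StrictMonoOn G (Ici a)) (htop : Tendsto G atTop atTop) :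
    BijOn G (Ioi a) (Ioi (G a)) := by
  refine ⟨fun x hx => hmono self_mem_Ici (mem_Ici.2 (le_of_lt hx)) hx,
    hmono.injOn.mono Ioi_subset_Ici_self, ?_⟩
  intro r hr
  obtain ⟨M, hrM, haM⟩ := ((htop.eventually_ge_atTop r).and (eventually_ge_atTop a)).exists
  obtain ⟨x, hx, hGx⟩ := intermediate_value_Ioc haM (hcont.mono Icc_subset_Ici_self) ⟨hr, hrM⟩
  exact ⟨x, hx.1, hGx⟩

section InvFunOn

variable {α β : Type*} [LinearOrder α] [Nonempty α] [LinearOrder β] {f : α → β} {s : Set α}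
  {t : Set β}

theorem StrictMonoOn.strictMonoOn_invFunOn (hmono : StrictMonoOn f s) (hbij : BijOn f s t) :
    StrictMonoOn (invFunOn f s) t := by
  intro x hx y hy hxy
  have hinv := hbij.invOn_invFunOn
  have hmaps := hbij.surjOn.mapsTo_invFunOn
  rw [← hmono.lt_iff_lt (hmaps hx) (hmaps hy), hinv.2 hx, hinv.2 hy]
  exact hxy

variable [TopologicalSpace α] [OrderTopology α] [TopologicalSpace β] [OrderTopology β]
  [DenselyOrdered α]

theorem StrictMonoOn.continuousAt_invFunOn (hmono : StrictMonoOn f s) (hbij : BijOn f s t)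
    (hs : IsOpen s) (ht : IsOpen t) {y : β} (hy : y ∈ t) : ContinuousAt (invFunOn f s) y := by
  refine (hmono.strictMonoOn_invFunOn hbij).continuousAt_of_image_mem_nhds (ht.mem_nhds hy) ?_
  rw [(hbij.symm hbij.invOn_invFunOn.symm).image_eq]
  exact hs.mem_nhds (hbij.surjOn.mapsTo_invFunOn hy)

end InvFunOn

theorem StrictMonoOn.hasDerivAt_invFunOn {f : ℝ → ℝ} {s t : Set ℝ} (hmono : StrictMonoOn f s)
    (hbij : BijOn f s t) (hs : IsOpen s) (ht : IsOpen t) {y f' : ℝ} (hy : y ∈ t)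
    (hf : HasDerivAt f f' (invFunOn f s y)) (hf' : f' ≠ 0) :
    HasDerivAt (invFunOn f s) f'⁻¹ y :=
  hf.of_local_left_inverse (hmono.continuousAt_invFunOn hbij hs ht hy) hf' <|
    eventually_of_mem (ht.mem_nhds hy) fun _ hz => hbij.invOn_invFunOn.2 hz

noncomputable def permeability (F : ℝ → ℝ) (s : ℝ) : ℝ := F √s / √s

theorem permeability_sq (F : ℝ → ℝ) {r : ℝ} (hr : 0 ≤ r) : permeability F (r ^ 2) = F r / r := by
  rw [permeability, Real.sqrt_sq hr]

theorem hasDerivAt_permeability {F : ℝ → ℝ} {F' s : ℝ} (hs : 0 < s) (hF : HasDerivAt F F' √s) :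
    HasDerivAt (permeability F) ((F' - permeability F s) / (2 * s)) s := by
  have hsqrt : 0 < √s := Real.sqrt_pos.2 hs
  have h := (hF.comp s (Real.hasDerivAt_sqrt hs.ne')).div (Real.hasDerivAt_sqrt hs.ne') hsqrt.ne'
  refine h.congr_deriv ?_
  rw [permeability, Function.comp_apply]
  field_simp
  rw [Real.sq_sqrt hs.le]
  ring

theorem permeability_add_two_mul_deriv {F : ℝ → ℝ} {F' s : ℝ} (hs : 0 < s)
    (hF : HasDerivAt F F' √s) :
    permeability F s + 2 * s * deriv (permeability F) s = F' := by
  rw [(hasDerivAt_permeability hs hF).deriv]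
  field_simp
  ring

theorem smul_permeability_smul {E : Type*} [NormedAddCommGroup E] [NormedSpace ℝ E] {g F : ℝ → ℝ}
    {b : E} (hb : b ≠ 0) (hF : F ‖b‖ * g (F ‖b‖) = ‖b‖) (hF0 : 0 ≤ F ‖b‖) :
    g ‖permeability F (‖b‖ ^ 2) • b‖ • (permeability F (‖b‖ ^ 2) • b) = b := by
  have hb' : 0 < ‖b‖ := norm_pos_iff.2 hb
  rw [permeability_sq F (norm_nonneg b), norm_smul, Real.norm_eq_abs,
    abs_of_nonneg (div_nonneg hF0 hb'.le), div_mul_cancel₀ _ hb'.ne', smul_smul]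
  convert one_smul ℝ b
  field_simp
  linarith

theorem forchheimer_to_darcy_general (n : ℕ) (g : ℝ → ℝ)
    (hg_cont : ContinuousOn g (Set.Ici (0 : ℝ)))
    (hg_diff : ∀ s ∈ Set.Ioi (0 : ℝ), DifferentiableAt ℝ g s)
    (hderiv_pos : ∀ s ∈ Set.Ioi (0 : ℝ), 0 < deriv (fun t => t * g t) s)
    (htop : Filter.Tendsto (fun s => s * g s) Filter.atTop Filter.atTop) :
    ∃ k : ℝ → ℝ,
      (∀ s ∈ Set.Ioi (0 : ℝ), DifferentiableAt ℝ k s) ∧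
      (∀ s ∈ Set.Ioi (0 : ℝ), 0 < k s ∧ 0 < k s + 2 * s * deriv k s) ∧
      (∀ b : EuclideanSpace ℝ (Fin n), b ≠ 0 →
        g ‖k (‖b‖ ^ 2) • b‖ • (k (‖b‖ ^ 2) • b) = b) := by
  set G : ℝ → ℝ := fun t => t * g t
  have hcont : ContinuousOn G (Ici 0) := continuousOn_id.mul hg_cont
  have hmono : StrictMonoOn G (Ici 0) :=
    strictMonoOn_of_deriv_pos (convex_Ici 0) hcont (by simpa only [interior_Ici] using hderiv_pos)
  have hbij : BijOn G (Ioi 0) (Ioi 0) := by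
    simpa only [G, zero_mul] using bijOn_Ioi_of_strictMonoOn_Ici hcont hmono htop
  set F := invFunOn G (Ioi 0)
  have hF_pos : ∀ r ∈ Ioi (0 : ℝ), 0 < F r := hbij.surjOn.mapsTo_invFunOn
  have hF_deriv : ∀ r ∈ Ioi (0 : ℝ), HasDerivAt F (deriv G (F r))⁻¹ r := fun r hr =>
    (hmono.mono Ioi_subset_Ici_self).hasDerivAt_invFunOn hbij isOpen_Ioi isOpen_Ioi hr
      (differentiableAt_id.mul (hg_diff _ (hF_pos r hr))).hasDerivAt
      (hderiv_pos _ (hF_pos r hr)).ne'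
  refine ⟨permeability F, fun s hs => ?_, fun s hs => ?_, fun b hb => ?_⟩
  · exact (hasDerivAt_permeability hs (hF_deriv _ (Real.sqrt_pos.2 hs))).differentiableAt
  · have hr : √s ∈ Ioi (0 : ℝ) := Real.sqrt_pos.2 hs
    refine ⟨div_pos (hF_pos _ hr) hr, ?_⟩
    rw [permeability_add_two_mul_deriv hs (hF_deriv _ hr)]
    exact inv_pos.2 (hderiv_pos _ (hF_pos _ hr))
  · have hr : ‖b‖ ∈ Ioi (0 : ℝ) := norm_pos_iff.2 hb
    exact smul_permeability_smul hb (hbij.invOn_invFunOn.2 hr) (hF_pos _ hr).le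

/-- Forchheimer's law induces a generalized Darcy law: there is a permeability
function `k` with `k(s) > 0` and `k(s) + 2 s k'(s) > 0` such that
`u = k(‖b‖²) b` solves `g(‖u‖) u = b` for every `b ≠ 0`. -/
theorem forchheimer_to_darcy (n : ℕ) (hn : 1 ≤ n) (g : ℝ → ℝ)
    (hg_cont : ContinuousOn g (Set.Ici (0 : ℝ)))
    (hg_diff : ∀ s ∈ Set.Ioi (0 : ℝ), DifferentiableAt ℝ g s)
    (hg_pos : ∀ s ∈ Set.Ici (0 : ℝ), 0 < g s)
    (hderiv_pos : ∀ s ∈ Set.Ioi (0 : ℝ), 0 < deriv (fun t => t * g t) s)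
    (htop : Filter.Tendsto (fun s => s * g s) Filter.atTop Filter.atTop) :
    ∃ k : ℝ → ℝ,
      (∀ s ∈ Set.Ioi (0 : ℝ), DifferentiableAt ℝ k s) ∧
      (∀ s ∈ Set.Ioi (0 : ℝ), 0 < k s ∧ 0 < k s + 2 * s * deriv k s) ∧
      (∀ b : EuclideanSpace ℝ (Fin n), b ≠ 0 →
        g ‖k (‖b‖ ^ 2) • b‖ • (k (‖b‖ ^ 2) • b) = b) :=
  forchheimer_to_darcy_general n g hg_cont hg_diff hderiv_pos htop
end

section
/- Let I be a finite set and m ≥ 1. Let a : I → ℝ with a(i) > 0, let ε : I → ℝ with ε(i) ∈ {−1, 1}, let δ : I × Fin m → ℝ with δ(i,k) ∈ {0, 1}, and let s, R : Fin m → ℝ with s(k) > 0 and R(k) > 0; let σ > 0 and n ≥ 2 be given. Suppose v : I → ℝ and h : Fin m → ℝ satisfy the constraint a(i)·v(i) = ε(i)·Σ_k s(k)·h(k)·δ(i,k) for every i ∈ I. Then Σ_i a(i)·v(i)² − σ(n−1)·Σ_k s(k)·h(k)²/R(k)² = Σ_{k,l} c(k,l)·(s(k)h(k))·(s(l)h(l)),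 where c(k,l) = Σ_i δ(i,k)·δ(i,l)/a(i) − (σ(n−1)/(R(k)²·s(k)))·[k = l]. -/
/-!
Solving the mass constraint for `v i` turns `∑ i, a i * v i ^ 2` into `∑ i, (∑ k, δ i k * x k)² / a i`
with `x k = s k * h k` (the sign `ε i` disappears on squaring), which is the Gram-type quadratic form
`∑ k l, (∑ i, δ i k * δ i l / a i) * x k * x l`. The surface term is the diagonal quadratic form
with weights `σ (n - 1) / (R k ^ 2 * s k)` in the same variables `x k`.
-/

open Finset

section Field

variable {K : Type*} [Field K]

lemma mul_sq_eq_mul_sq_div (a b : K) : a * b ^ 2 = (a * b) ^ 2 / a := by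
  rcases eq_or_ne a 0 with rfl | ha
  · simp
  · field_simp

lemma div_mul_mul_sq_eq (c r s y : K) : c / (r * s) * (s * y) ^ 2 = c * (s * y ^ 2 / r) := by
  rcases eq_or_ne s 0 with rfl | hs
  · simp
  · rcases eq_or_ne r 0 with rfl | hr
    · simp
    · field_simp

variable {ι κ : Type*} [Fintype ι] [Fintype κ]

lemma sum_sq_div_eq_sum_sum (a : ι → K) (δ : ι → κ → K) (x : κ → K) :
    ∑ i, (∑ k, x k * δ i k) ^ 2 / a i
      = ∑ k, ∑ l, (∑ i, δ i k * δ i l / a i) * x k * x l := by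
  simp_rw [sq, sum_mul_sum, sum_div, sum_mul]
  rw [sum_comm]
  refine sum_congr rfl fun k _ => ?_
  rw [sum_comm]
  refine sum_congr rfl fun l _ => sum_congr rfl fun i _ => ?_
  ring

lemma sum_sum_diagonal_mul_mul [DecidableEq κ] (d x : κ → K) :
    ∑ k, ∑ l, (d k * if k = l then (1 : K) else 0) * x k * x l = ∑ k, d k * x k ^ 2 := by
  refine sum_congr rfl fun k _ => ?_
  rw [sum_eq_single k (fun l _ hl => by simp [Ne.symm hl]) (by simp)]
  simp [sq, mul_assoc]

end Field

open Finset in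
theorem second_variation_matrix_identity_general (I : Type*) [Fintype I]
    (m : ℕ) (n : ℕ)
    (a : I → ℝ)
    (ε : I → ℝ) (hε : ∀ i, ε i = -1 ∨ ε i = 1)
    (δ : I → Fin m → ℝ)
    (s R : Fin m → ℝ)
    (σ : ℝ)
    (v : I → ℝ) (h : Fin m → ℝ)
    (hconstraint : ∀ i, a i * v i = ε i * ∑ k, s k * h k * δ i k) :
    (∑ i, a i * (v i) ^ 2)
        - σ * ((n : ℝ) - 1) * ∑ k, s k * (h k) ^ 2 / (R k) ^ 2
      = ∑ k, ∑ l,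
          ((∑ i, δ i k * δ i l / a i)
              - (σ * ((n : ℝ) - 1) / ((R k) ^ 2 * s k))
                  * (if k = l then (1 : ℝ) else 0))
            * (s k * h k) * (s l * h l) := by
  have hbulk : ∑ i, a i * v i ^ 2
      = ∑ k, ∑ l, (∑ i, δ i k * δ i l / a i) * (s k * h k) * (s l * h l) := by
    rw [← sum_sq_div_eq_sum_sum]
    refine sum_congr rfl fun i _ => ?_
    have hε_sq : ε i ^ 2 = 1 := by rcases hε i with hi | hi <;> simp [hi]
    rw [mul_sq_eq_mul_sq_div, hconstraint i, mul_pow, hε_sq, one_mul]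
  have hsurface : σ * ((n : ℝ) - 1) * ∑ k, s k * h k ^ 2 / R k ^ 2
      = ∑ k, ∑ l, (σ * ((n : ℝ) - 1) / (R k ^ 2 * s k) * if k = l then (1 : ℝ) else 0)
          * (s k * h k) * (s l * h l) := by
    rw [sum_sum_diagonal_mul_mul, mul_sum]
    exact sum_congr rfl fun k _ => (div_mul_mul_sq_eq _ _ _ _).symm
  rw [hbulk, hsurface, ← sum_sub_distrib]
  refine sum_congr rfl fun k _ => ?_
  rw [← sum_sub_distrib]
  exact sum_congr rfl fun l _ => by ring

open Finset in
/-- The second variation of the available energy for the Verigin problem without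
phase transition, restricted to piecewise-constant perturbations satisfying the
mass constraints, equals the quadratic form of the matrix `C*`. -/
theorem second_variation_matrix_identity (I : Type*) [Fintype I]
    (m : ℕ) (hm : 1 ≤ m) (n : ℕ) (hn : 2 ≤ n)
    (a : I → ℝ) (ha : ∀ i, 0 < a i)
    (ε : I → ℝ) (hε : ∀ i, ε i = -1 ∨ ε i = 1)
    (δ : I → Fin m → ℝ) (hδ : ∀ i k, δ i k = 0 ∨ δ i k = 1)
    (s R : Fin m → ℝ) (hs : ∀ k, 0 < s k) (hR : ∀ k, 0 < R k)
    (σ : ℝ) (hσ : 0 < σ)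
    (v : I → ℝ) (h : Fin m → ℝ)
    (hconstraint : ∀ i, a i * v i = ε i * ∑ k, s k * h k * δ i k) :
    (∑ i, a i * (v i) ^ 2)
        - σ * ((n : ℝ) - 1) * ∑ k, s k * (h k) ^ 2 / (R k) ^ 2
      = ∑ k, ∑ l,
          ((∑ i, δ i k * δ i l / a i)
              - (σ * ((n : ℝ) - 1) / ((R k) ^ 2 * s k))
                  * (if k = l then (1 : ℝ) else 0))
            * (s k * h k) * (s l * h l) :=
  second_variation_matrix_identity_general I m n a ε hε δ s R σ v h hconstraint
end

section
/- Let m ≥ 1 be an integer, and let A > 0, s > 0, μ > 0 and J ≠ 0 be real numbers. Define the quadratic form Q(w,h) = A·w² − μ·s·Σ_{k=1}^m h(k)² on ℝ × ℝ^m, and the constraint set S = {(w,h) : A·w = J·s·Σ_{k=1}^m h(k)}. Then Q(w,h) ≥ 0 for all (w,h) ∈ S if and only if m = 1 and ζ ≤ 1, where ζ := μ·A/(J²·m·s). -/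
open Finset in
/-- For the Verigin problem with phase transition, the constrained second
variation `Q(w,h) = A w² - μ s Σ h_k²` is nonnegative on the constraint set
`{A w = J s Σ h_k}` if and only if `m = 1` (the interface is connected) and the
stability number `ζ = μ A / (J² m s)` satisfies `ζ ≤ 1`. -/
theorem stability_condition_phase_transition (m : ℕ) (hm : 1 ≤ m)
    (A s μ J : ℝ) (hA : 0 < A) (hs : 0 < s) (hμ : 0 < μ) (hJ : J ≠ 0) :
    (∀ (w : ℝ) (h : Fin m → ℝ), A * w = J * s * ∑ k, h k →
        0 ≤ A * w ^ 2 - μ * s * ∑ k, (h k) ^ 2)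
      ↔ (m = 1 ∧ μ * A / (J ^ 2 * (m : ℝ) * s) ≤ 1) := by
  constructor
  · intro H
    have hm1 : m = 1 := by
      by_contra hne
      have hm2 : 2 ≤ m := lt_of_le_of_ne hm (Ne.symm hne)
      set i0 : Fin m := ⟨0, by omega⟩ with hi0
      set i1 : Fin m := ⟨1, by omega⟩ with hi1
      have hne01 : i0 ≠ i1 := by
        simp [hi0, hi1, Fin.ext_iff]
      set f : Fin m → ℝ := fun k => (if k = i0 then (1:ℝ) else 0) + (if k = i1 then -1 else 0) with hf
      have hsum : ∑ k, f k = 0 := by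
        simp [hf, Finset.sum_add_distrib, Finset.sum_ite_eq']
      have hsq : ∑ k, (f k)^2 = 2 := by
        have key : ∀ k, (f k)^2 = (if k = i0 then (1:ℝ) else 0) + (if k = i1 then 1 else 0) := by
          intro k
          by_cases h0 : k = i0
          · simp [hf, h0, hne01]
          · by_cases h1 : k = i1
            · simp [hf, h0, h1, Ne.symm hne01]
            · simp [hf, h0, h1]
        rw [Finset.sum_congr rfl fun k _ => key k]
        simp [Finset.sum_add_distrib, Finset.sum_ite_eq']
        norm_num
      have := H 0 f (by simp [hsum])
      rw [hsq] at this
      nlinarith [mul_pos hμ hs]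
    subst hm1
    refine ⟨rfl, ?_⟩
    have hc : A * (J * s / A) = J * s * ∑ _k : Fin 1, (1:ℝ) := by
      rw [Fin.sum_univ_one]; field_simp
    have hQ := H (J * s / A) (fun _ => 1) hc
    rw [Fin.sum_univ_one] at hQ
    rw [div_le_one (by positivity)]
    have hA' : A ≠ 0 := ne_of_gt hA
    have h1 : A * (J * s / A) ^ 2 = J^2 * s^2 / A := by field_simp
    rw [h1] at hQ
    norm_num at hQ
    have h2 : μ * s * A ≤ J ^ 2 * s ^ 2 := by
      exact (le_div_iff₀ hA).mp hQ
    push_cast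
    nlinarith [hs]
  · rintro ⟨rfl, hζ⟩
    intro w h hc
    rw [Fin.sum_univ_one] at hc
    rw [Fin.sum_univ_one]
    rw [div_le_one (by positivity)] at hζ
    have hμA : μ * A ≤ J ^ 2 * s := by push_cast at hζ; linarith
    have hsq : (A * w)^2 = (J * s * h 0)^2 := by rw [hc]
    nlinarith [hsq, mul_nonneg (sub_nonneg.2 hμA) (mul_nonneg hs.le (sq_nonneg (h 0))),
      mul_pos hA hA, sq_nonneg (h 0), hA, hs]
end
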